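/- Fix p with 1 < p ≤ 2. Then for every t ∈ (0, 1] one has (1/p) t^p − 1/p − (t − 1) ≤ ((p − 1)/2) (ln t)². -/

import Mathlib

/-! Substituting `t = exp (-u)` with `u ≥ 0`, the claim becomes the nonnegativity of
`F u = (p - 1)/2 · u² - (exp (-p u)/p - 1/p - (exp (-u) - 1))`, which vanishes at `0`.
Its derivative `(p - 1) u - (exp (-u) - exp (-p u))` is nonnegative because
`exp (-p u) = exp (-u) exp (-(p - 1) u) ≥ exp (-u) (1 - (p - 1) u)` and `exp (-u) ≤ 1`. -/

open Real Set

lemma exp_neg_sub_exp_neg_mul_le {p u : ℝ} (hp : 1 ≤ p) (hu : 0 ≤ u) :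
    exp (-u) - exp (-(p * u)) ≤ (p - 1) * u := by
  have hsplit : exp (-(p * u)) = exp (-u) * exp (-((p - 1) * u)) := by
    rw [← exp_add]; ring_nf
  have htangent : 1 - (p - 1) * u ≤ exp (-((p - 1) * u)) := by
    linarith [add_one_le_exp (-((p - 1) * u))]
  have hexp_le : exp (-u) ≤ 1 := exp_le_one_iff.mpr (by linarith)
  have hpu : 0 ≤ (p - 1) * u := mul_nonneg (by linarith) hu
  rw [hsplit]
  nlinarith [exp_pos (-u), mul_nonneg (sub_nonneg.mpr hexp_le) hpu]

lemma hasDerivAt_exp_gap {p : ℝ} (hp : p ≠ 0) (u : ℝ) :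
    HasDerivAt (fun u => (p - 1) / 2 * u ^ 2 - (1 / p * exp (-(p * u)) - 1 / p - (exp (-u) - 1)))
      ((p - 1) * u - (exp (-u) - exp (-(p * u)))) u := by
  have hsq : HasDerivAt (fun u : ℝ => (p - 1) / 2 * u ^ 2) ((p - 1) / 2 * (2 * u)) u := by
    simpa using (hasDerivAt_pow 2 u).const_mul ((p - 1) / 2)
  have hlin : HasDerivAt (fun u : ℝ => -(p * u)) (-p) u := by
    simpa using (hasDerivAt_id' u).const_mul (-p)
  have hexp_mul : HasDerivAt (fun u => 1 / p * exp (-(p * u))) (1 / p * (exp (-(p * u)) * -p)) u :=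
    hlin.exp.const_mul _
  have hexp : HasDerivAt (fun u : ℝ => exp (-u)) (exp (-u) * -1) u := (hasDerivAt_neg u).exp
  refine (hsq.sub ((hexp_mul.sub_const _).sub (hexp.sub_const 1))).congr_deriv ?_
  field_simp
  ring

lemma one_div_mul_exp_neg_mul_sub_le {p u : ℝ} (hp : 1 ≤ p) (hu : 0 ≤ u) :
    1 / p * exp (-(p * u)) - 1 / p - (exp (-u) - 1) ≤ (p - 1) / 2 * u ^ 2 := by
  have hderiv := hasDerivAt_exp_gap (p := p) (by linarith)
  have hmono : MonotoneOn
      (fun u => (p - 1) / 2 * u ^ 2 - (1 / p * exp (-(p * u)) - 1 / p - (exp (-u) - 1)))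
      (Ici 0) := by
    refine monotoneOn_of_hasDerivWithinAt_nonneg (convex_Ici 0)
      (fun x _ => (hderiv x).continuousAt.continuousWithinAt)
      (fun x _ => (hderiv x).hasDerivWithinAt) fun x hx => ?_
    rw [interior_Ici] at hx
    linarith [exp_neg_sub_exp_neg_mul_le hp (le_of_lt hx)]
  have hgap := hmono self_mem_Ici hu hu
  simp only [mul_zero, neg_zero, exp_zero, mul_one] at hgap
  linarith

theorem stmt_13 (p : ℝ) (hp1 : 1 < p) (t : ℝ) (ht : t ∈ Set.Ioc (0 : ℝ) 1) :
    (1 / p) * t ^ p - 1 / p - (t - 1) ≤ ((p - 1) / 2) * (Real.log t) ^ 2 := by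
  obtain ⟨ht0, ht1⟩ := ht
  have hu : 0 ≤ -log t := neg_nonneg.mpr (log_nonpos ht0.le ht1)
  have ht_exp : exp (-(-log t)) = t := by rw [neg_neg, exp_log ht0]
  have hrpow : t ^ p = exp (-(p * -log t)) := by rw [rpow_def_of_pos ht0]; ring_nf
  have key := one_div_mul_exp_neg_mul_sub_le hp1.le hu
  rw [ht_exp, neg_sq] at key
  rwa [hrpow]
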